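/- Let g be a regular unitary automorphism of a hermitian space (V, h) over (E, σ) whose characteristic polynomial (equal to its minimal polynomial) is P^a with P monic irreducible satisfying P = P*. Then: (i) for every 0 ≤ m ≤ a, (ker P(g)^m)^⊥ = ker P(g)^{a−m}; (ii) ker P(g)^m is totally isotropic if and only if 2m ≤ a; (iii) if a is even, ker P(g)^{a/2} is the unique g-invariant maximal totally isotropic subspace of V; (iv) if a is odd, then W = ker P(g)^{(a−1)/2} is the unique g-invariant totally isotropic subspace of V such that the characteristic polynomial of the map induced by g on W^⊥/W is irreducible, and that characteristic polynomial equals P. -/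

import Mathlib

open scoped Classical

/-- `P*`: for monic `P` with nonzero constant term `b_d`, `P*(T) = σ(b_d)⁻¹ T^d P^σ(T⁻¹)`. -/
noncomputable def pstar {k : Type*} [Field k] (σ : k →+* k) (P : Polynomial k) : Polynomial k :=
  Polynomial.C (σ (P.coeff 0))⁻¹ * (P.map σ).reverse

/-- The perpendicular `W^⊥ = {x : h(x, W) = 0}` of a subspace w.r.t. a sesquilinear form. -/
def perp {k V : Type*} [Field k] [AddCommGroup V] [Module k V] {σ : k →+* k}
    (B : V →ₗ[k] V →ₛₗ[σ] k) (W : Submodule k V) : Submodule k V where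
  carrier := {x | ∀ w ∈ W, B x w = 0}
  add_mem' := by
    intro x y hx hy w hw
    simp [map_add, hx w hw, hy w hw]
  zero_mem' := by
    intro w hw
    simp
  smul_mem' := by
    intro c x hx w hw
    simp [map_smul, hx w hw]

/-- The endomorphism induced on the subquotient `P/W` by an endomorphism `f` leaving
`P` and `W` invariant (junk value `0` otherwise). -/
noncomputable def inducedMap {k V : Type*} [Field k] [AddCommGroup V] [Module k V]
    (f : V →ₗ[k] V) (W P : Submodule k V) :
    (↥P ⧸ (Submodule.comap P.subtype W)) →ₗ[k] (↥P ⧸ (Submodule.comap P.subtype W)) :=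
  if hf : (∀ x ∈ P, f x ∈ P) ∧ (∀ x ∈ W, f x ∈ W) then
    Submodule.mapQ _ _ (f.restrict hf.1) (by
      intro x hx
      simp only [Submodule.mem_comap, LinearMap.restrict_apply, Submodule.subtype_apply] at hx ⊢
      exact hf.2 _ hx)
  else 0

/-!
Write `q = P(g)` and `d = deg P`. Since the minimal polynomial of `g` is `P^a`, the kernels
`ker q^m` increase strictly for `m ≤ a`; every `g`-invariant subspace has a power of `P` as
characteristic polynomial, hence dimension divisible by `d`; and `dim V = a d`. So
`dim ker q^m = m d`, and `ker q^m` is the only invariant subspace of that dimension.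
The condition `P = P*` says that the adjoint `P^σ(g⁻¹)` of `q` is `q` times a unit commuting
with `q`, so `range q^m ⊥ ker q^m`; comparing dimensions gives
`(ker q^m)^⊥ = range q^m = ker q^{a-m}`. The rest is dimension counting: an isotropic subspace
has dimension at most `a d / 2`, and `g` induces on `ker q^n / ker q^j` an endomorphism with
characteristic polynomial `P^{n-j}`.
-/

open Polynomial Module

section Charpoly

variable {E : Type*} [Field E]

theorem Matrix.charpoly_dvd_pow_card_of_aeval_eq_zero {n : Type*} [Fintype n] [DecidableEq n]
    (M : Matrix n n E) {m : E[X]} (hm : aeval M m = 0) : M.charpoly ∣ m ^ Fintype.card n := by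
  let M' : Matrix n n E[X] := (Algebra.ofId E E[X]).mapMatrix M
  -- In `E[X][Y]`, `Y - X ∣ m(Y) - m(X)`; evaluating `Y` at `M` gives
  -- `m(X) • 1 = charmatrix M * N`, and we take determinants.
  obtain ⟨c, hc⟩ : X - C X ∣ m.map (algebraMap E E[X]) - C m := by
    simpa [eval_map] using X_sub_C_dvd_sub_C_eval (a := (X : E[X])) (p := m.map C)
  have hM' : aeval M' (m.map (algebraMap E E[X])) = 0 := by
    rw [aeval_map_algebraMap, aeval_algHom_apply, hm, map_zero]
  have key : Matrix.scalar n m = M.charmatrix * aeval M' c := by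
    have := congrArg (aeval M') hc
    rw [map_sub, hM', map_mul, map_sub, aeval_X, aeval_C, aeval_C] at this
    have hchar : M.charmatrix = algebraMap E[X] _ X - M' := rfl
    rw [hchar, ← neg_sub, neg_mul, ← this, zero_sub, neg_neg]
    rfl
  refine ⟨(aeval M' c).det, ?_⟩
  rw [Matrix.charpoly, ← Matrix.det_mul, ← key]
  simp

variable {U : Type*} [AddCommGroup U] [Module E U] [FiniteDimensional E U]

theorem LinearMap.charpoly_dvd_pow_finrank_of_aeval_eq_zero (t : Module.End E U) {m : E[X]}
    (hm : aeval t m = 0) : t.charpoly ∣ m ^ finrank E U := by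
  let b := finBasis E U
  have hM : aeval (toMatrix b b t) m = 0 := by
    change aeval (toMatrixAlgEquiv b t) m = 0
    rw [aeval_algEquiv, AlgHom.comp_apply, hm, map_zero]
  simpa [charpoly_toMatrix] using (toMatrix b b t).charpoly_dvd_pow_card_of_aeval_eq_zero hM

theorem LinearMap.exists_charpoly_eq_pow_of_aeval_pow_eq_zero (t : Module.End E U) {P : E[X]}
    (hPm : P.Monic) (hP : Irreducible P) {s : ℕ} (hs : aeval t (P ^ s) = 0) :
    ∃ i, t.charpoly = P ^ i ∧ finrank E U = i * P.natDegree := by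
  have hdvd : t.charpoly ∣ P ^ (s * finrank E U) :=
    pow_mul P s _ ▸ t.charpoly_dvd_pow_finrank_of_aeval_eq_zero hs
  obtain ⟨i, -, hi⟩ := (dvd_prime_pow hP.prime _).mp hdvd
  have hchar := eq_of_monic_of_associated t.charpoly_monic (hPm.pow i) hi
  exact ⟨i, hchar, by rw [← t.charpoly_natDegree, hchar, natDegree_pow]⟩

end Charpoly

section Induced

variable {E : Type*} [Field E] {V : Type*} [AddCommGroup V] [Module E V]

theorem comp_aeval_eq_aeval_comp {U W : Type*} [AddCommGroup U] [Module E U] [AddCommGroup W]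
    [Module E W] (φ : U →ₗ[E] W) {s : Module.End E U} {t : Module.End E W}
    (h : t ∘ₗ φ = φ ∘ₗ s) (p : E[X]) : φ ∘ₗ aeval s p = aeval t p ∘ₗ φ := by
  induction p using Polynomial.induction_on' with
  | add p q hp hq => rw [map_add, map_add, LinearMap.comp_add, LinearMap.add_comp, hp, hq]
  | monomial n c =>
    rw [aeval_monomial, aeval_monomial, ← Algebra.smul_def, ← Algebra.smul_def,
      LinearMap.comp_smul, LinearMap.smul_comp, Module.End.commute_pow_left_of_commute h]

theorem aeval_restrict_apply {f : Module.End E V} {W : Submodule E V} (hW : ∀ x ∈ W, f x ∈ W)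
    (p : E[X]) (x : W) : (aeval (f.restrict hW) p x : V) = aeval f p x :=
  LinearMap.congr_fun (comp_aeval_eq_aeval_comp W.subtype (by ext; rfl) p) x

theorem inducedMap_comp_mkQ {f : Module.End E V} {W Q : Submodule E V} (hQ : ∀ x ∈ Q, f x ∈ Q)
    (hW : ∀ x ∈ W, f x ∈ W) :
    inducedMap f W Q ∘ₗ (W.comap Q.subtype).mkQ = (W.comap Q.subtype).mkQ ∘ₗ f.restrict hQ := by
  rw [inducedMap, dif_pos ⟨hQ, hW⟩, Submodule.mapQ_mkQ]

theorem aeval_inducedMap_eq_zero {f : Module.End E V} {W Q : Submodule E V}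
    (hQ : ∀ x ∈ Q, f x ∈ Q) (hW : ∀ x ∈ W, f x ∈ W) {p : E[X]}
    (hp : ∀ x ∈ Q, aeval f p x ∈ W) : aeval (inducedMap f W Q) p = 0 := by
  refine LinearMap.ext fun z => ?_
  obtain ⟨x, rfl⟩ := Submodule.mkQ_surjective _ z
  have := LinearMap.congr_fun (comp_aeval_eq_aeval_comp _ (inducedMap_comp_mkQ hQ hW) p) x
  simp only [LinearMap.comp_apply] at this
  rw [← this, LinearMap.zero_apply, Submodule.mkQ_apply, Submodule.Quotient.mk_eq_zero,
    Submodule.mem_comap, Submodule.subtype_apply, aeval_restrict_apply]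
  exact hp x x.2

theorem finrank_quotient_comap_subtype_add_finrank [FiniteDimensional E V] {W Q : Submodule E V}
    (hWQ : W ≤ Q) : finrank E (Q ⧸ W.comap Q.subtype) + finrank E W = finrank E Q := by
  rw [← (Submodule.comapSubtypeEquivOfLe hWQ).finrank_eq]
  exact Submodule.finrank_quotient_add_finrank _

end Induced

section Perp

variable {E : Type*} [Field E] {V : Type*} [AddCommGroup V] [Module E V] {σ : E →+* E}

theorem perp_eq_dualCoannihilator (B : V →ₗ[E] V →ₛₗ[σ] E) [RingHomSurjective σ]
    (W : Submodule E V) : perp B W = (W.map B.flip).dualCoannihilator := by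
  ext x
  simp [perp, Submodule.mem_dualCoannihilator]

variable [FiniteDimensional E V]

theorem finrank_perp_add_finrank (hσ : Function.Bijective σ) (B : V →ₗ[E] V →ₛₗ[σ] E)
    (hB : ∀ w, (∀ x, B x w = 0) → w = 0) (W : Submodule E V) :
    finrank E (perp B W) + finrank E W = finrank E V := by
  have : RingHomSurjective σ := ⟨hσ.2⟩
  have hinj : Function.Injective (B.flip.submoduleMap W) := by
    refine (injective_iff_map_eq_zero _).mpr fun w hw => Subtype.ext (hB _ fun x => ?_)
    simpa using LinearMap.congr_fun (congrArg Subtype.val hw) x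
  -- `B.flip` is only `σ`-semilinear, so the ranks are compared through the bijection `σ`.
  have hrank : finrank E (W.map B.flip) = finrank E W := by
    simpa [Cardinal.toNat_lift] using! (congrArg Cardinal.toNat
      (lift_rank_eq_of_equiv_equiv σ (AddEquiv.ofBijective (B.flip.submoduleMap W)
        ⟨hinj, B.flip.submoduleMap_surjective W⟩) hσ
        fun c w => map_smulₛₗ (B.flip.submoduleMap W) c w)).symm
  rw [perp_eq_dualCoannihilator, ← hrank, add_comm]
  exact Subspace.finrank_add_finrank_dualCoannihilator_eq _

theorem two_mul_finrank_le_of_le_perp (hσ : Function.Bijective σ) {B : V →ₗ[E] V →ₛₗ[σ] E}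
    (hB : ∀ w, (∀ x, B x w = 0) → w = 0) {W : Submodule E V} (hW : W ≤ perp B W) :
    2 * finrank E W ≤ finrank E V := by
  have := finrank_perp_add_finrank hσ B hB W
  have := Submodule.finrank_mono hW
  omega

end Perp

theorem eq_mul_of_forall_add_le {k : ℕ → ℕ} {a d m : ℕ} (hk : ∀ i < a, k i + d ≤ k (i + 1))
    (ha : k a ≤ a * d) (hm : m ≤ a) : k m = m * d := by
  have key : ∀ i j, i ≤ j → j ≤ a → k i + (j - i) * d ≤ k j := by
    intro i j hij hja
    induction j, hij using Nat.le_induction with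
    | base => simp
    | succ j hij ih =>
      have := hk j (by omega)
      have := ih (by omega)
      rw [Nat.sub_add_comm hij, Nat.succ_mul]
      omega
  have h1 := key 0 m (Nat.zero_le m) hm
  have h2 := key m a hm le_rfl
  have h3 : (a - m) * d + m * d = a * d := by rw [← Nat.add_mul, Nat.sub_add_cancel hm]
  simp only [Nat.sub_zero] at h1
  omega

theorem commute_aeval_self {E A : Type*} [Field E] [Ring A] [Algebra E A] (x : A) (p : E[X]) :
    Commute x (aeval x p) := by
  simpa using (commute_X p).map (aeval x)

section Primary

variable {E : Type*} [Field E] {V : Type*} [AddCommGroup V] [Module E V]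

theorem ker_pow_le_ker_pow (s : Module.End E V) {m n : ℕ} (h : m ≤ n) :
    LinearMap.ker (s ^ m) ≤ LinearMap.ker (s ^ n) := by
  obtain ⟨c, rfl⟩ := Nat.exists_eq_add_of_le h
  rw [add_comm, pow_add]
  exact LinearMap.ker_le_ker_comp _ _

theorem ker_aeval_pow_invariant (f : Module.End E V) (P : E[X]) (m : ℕ) :
    ∀ x ∈ LinearMap.ker (aeval f P ^ m), f x ∈ LinearMap.ker (aeval f P ^ m) := by
  intro x hx
  rw [LinearMap.mem_ker] at hx ⊢
  rw [← Module.End.mul_apply, ← ((commute_aeval_self f P).pow_right m).eq, Module.End.mul_apply,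
    hx, map_zero]

variable [FiniteDimensional E V] {f : Module.End E V} {P : E[X]} {a : ℕ}

theorem finrank_eq_mul_natDegree_of_charpoly_eq_pow (hchar : f.charpoly = P ^ a) :
    finrank E V = a * P.natDegree := by
  rw [← f.charpoly_natDegree, hchar, natDegree_pow]

theorem exists_finrank_eq_and_le_ker_of_invariant (hPm : P.Monic) (hP : Irreducible P)
    (hchar : f.charpoly = P ^ a) {W : Submodule E V} (hW : ∀ x ∈ W, f x ∈ W) :
    ∃ i ≤ a, finrank E W = i * P.natDegree ∧ W ≤ LinearMap.ker (aeval f P ^ i) := by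
  have hkill : aeval (f.restrict hW) (P ^ a) = 0 := by
    ext x
    rw [aeval_restrict_apply, ← hchar, LinearMap.aeval_self_charpoly]
    rfl
  obtain ⟨i, hi, hdim⟩ :=
    (f.restrict hW).exists_charpoly_eq_pow_of_aeval_pow_eq_zero hPm hP hkill
  refine ⟨i, ?_, hdim, fun x hx => ?_⟩
  · have := W.finrank_le
    rw [hdim, finrank_eq_mul_natDegree_of_charpoly_eq_pow hchar] at this
    exact Nat.le_of_mul_le_mul_right this hP.natDegree_pos
  · rw [LinearMap.mem_ker, ← map_pow, ← aeval_restrict_apply hW _ ⟨x, hx⟩, ← hi,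
      LinearMap.aeval_self_charpoly, LinearMap.zero_apply, ZeroMemClass.coe_zero]

theorem finrank_ker_aeval_pow (hPm : P.Monic) (hP : Irreducible P) (hchar : f.charpoly = P ^ a)
    (hmin : minpoly E f = P ^ a) {m : ℕ} (hm : m ≤ a) :
    finrank E (LinearMap.ker (aeval f P ^ m)) = m * P.natDegree := by
  set q := aeval f P
  have hqa : q ^ a = 0 := by rw [← map_pow, ← hmin, minpoly.aeval]
  have hlt : ∀ i < a, LinearMap.ker (q ^ i) < LinearMap.ker (q ^ (i + 1)) := by
    intro i hi
    refine lt_of_le_of_ne (ker_pow_le_ker_pow q i.le_succ) fun heq => ?_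
    have htop := Module.End.ker_pow_constant heq (a - i)
    rw [Nat.add_sub_cancel' hi.le, hqa, LinearMap.ker_zero, LinearMap.ker_eq_top] at htop
    have hPi : aeval f (P ^ i) = 0 := by rwa [map_pow]
    have := natDegree_le_of_dvd (hmin ▸ minpoly.dvd E f hPi) (pow_ne_zero i hPm.ne_zero)
    rw [natDegree_pow, natDegree_pow] at this
    exact absurd (Nat.le_of_mul_le_mul_right this hP.natDegree_pos) (by omega)
  have hdvd : ∀ i, P.natDegree ∣ finrank E (LinearMap.ker (q ^ i)) := fun i => by
    obtain ⟨j, -, hj, -⟩ :=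
      exists_finrank_eq_and_le_ker_of_invariant hPm hP hchar (ker_aeval_pow_invariant f P i)
    exact hj ▸ dvd_mul_left _ _
  refine eq_mul_of_forall_add_le (k := fun i => finrank E (LinearMap.ker (q ^ i)))
    (fun i hi => ?_) ?_ hm
  · obtain ⟨c, hc⟩ := hdvd i
    obtain ⟨c', hc'⟩ := hdvd (i + 1)
    have := Submodule.finrank_lt_finrank_of_lt (hlt i hi)
    rw [hc, hc'] at this ⊢
    have hcc : c + 1 ≤ c' := lt_of_mul_lt_mul_left this (Nat.zero_le _)
    simpa [mul_add] using Nat.mul_le_mul_left P.natDegree hcc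
  · rw [← finrank_eq_mul_natDegree_of_charpoly_eq_pow hchar]
    exact Submodule.finrank_le _

theorem exists_eq_ker_aeval_pow_of_invariant (hPm : P.Monic) (hP : Irreducible P)
    (hchar : f.charpoly = P ^ a) (hmin : minpoly E f = P ^ a) {W : Submodule E V}
    (hW : ∀ x ∈ W, f x ∈ W) : ∃ j ≤ a, W = LinearMap.ker (aeval f P ^ j) := by
  obtain ⟨j, hj, hdim, hle⟩ := exists_finrank_eq_and_le_ker_of_invariant hPm hP hchar hW
  exact ⟨j, hj, Submodule.eq_of_le_of_finrank_eq hle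
    (by rw [hdim, finrank_ker_aeval_pow hPm hP hchar hmin hj])⟩

theorem charpoly_inducedMap_ker_aeval_pow (hPm : P.Monic) (hP : Irreducible P)
    (hchar : f.charpoly = P ^ a) (hmin : minpoly E f = P ^ a) {j n : ℕ} (hjn : j ≤ n)
    (hn : n ≤ a) :
    (inducedMap f (LinearMap.ker (aeval f P ^ j)) (LinearMap.ker (aeval f P ^ n))).charpoly
      = P ^ (n - j) := by
  have hkill := aeval_inducedMap_eq_zero (ker_aeval_pow_invariant f P n)
    (ker_aeval_pow_invariant f P j) (p := P ^ (n - j)) fun x hx => by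
      rw [LinearMap.mem_ker, map_pow, ← Module.End.mul_apply, ← pow_add,
        Nat.add_sub_cancel' hjn]
      exact hx
  obtain ⟨i, hi, hdim⟩ := LinearMap.exists_charpoly_eq_pow_of_aeval_pow_eq_zero _ hPm hP hkill
  have := finrank_quotient_comap_subtype_add_finrank (ker_pow_le_ker_pow (aeval f P) hjn)
  rw [hdim, finrank_ker_aeval_pow hPm hP hchar hmin (hjn.trans hn),
    finrank_ker_aeval_pow hPm hP hchar hmin hn, ← Nat.add_mul] at this
  rw [hi, ← Nat.eq_of_mul_eq_mul_right hP.natDegree_pos this, Nat.add_sub_cancel]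

end Primary

section Adjoint

variable {E : Type*} [Field E] {V : Type*} [AddCommGroup V] [Module E V] {σ : E →+* E}
  {B : V →ₗ[E] V →ₛₗ[σ] E}

theorem LinearMap.IsAdjointPair.pow {f g : Module.End E V} (h : B.IsAdjointPair B f g)
    (n : ℕ) : B.IsAdjointPair B ⇑(f ^ n) ⇑(g ^ n) := by
  induction n with
  | zero => exact LinearMap.isAdjointPair_one
  | succ n ih => rw [pow_succ, pow_succ']; exact ih.mul h

theorem LinearMap.IsAdjointPair.aeval_map {f g : Module.End E V} (h : B.IsAdjointPair B f g)
    (p : E[X]) : B.IsAdjointPair B ⇑(aeval f (p.map σ)) ⇑(aeval g p) := by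
  induction p using Polynomial.induction_on' with
  | add p q hp hq => rw [Polynomial.map_add, map_add, map_add]; exact hp.add hq
  | monomial n c =>
    intro x y
    simp [aeval_monomial, Module.End.mul_apply, Module.algebraMap_end_apply, h.pow n x y]

theorem range_le_perp_ker {s t : Module.End E V} (h : B.IsAdjointPair B s t)
    (hst : LinearMap.ker s ≤ LinearMap.ker t) :
    LinearMap.range s ≤ perp B (LinearMap.ker s) := by
  rintro _ ⟨z, rfl⟩ w hw
  rw [h z w, hst hw, map_zero]

theorem range_pow_le_perp_ker_pow {q u : Module.End E V} (h : B.IsAdjointPair B q ⇑(u * q))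
    (hu : Commute u q) (m : ℕ) : LinearMap.range (q ^ m) ≤ perp B (LinearMap.ker (q ^ m)) :=
  range_le_perp_ker (h.pow m) (by rw [hu.mul_pow]; exact LinearMap.ker_le_ker_comp _ _)

theorem aeval_inv_reflect_mul_pow {A : Type*} [Ring A] [Algebra E A] (u : Aˣ) {N : ℕ}
    {p : E[X]} (hp : p.natDegree ≤ N) :
    aeval (↑u⁻¹ : A) (reflect N p) * ↑u ^ N = aeval (u : A) p := by
  refine induction_with_natDegree_le
    (fun p => aeval (↑u⁻¹ : A) (reflect N p) * ↑u ^ N = aeval (u : A) p) N ?_ ?_ ?_ p hp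
  · simp
  · intro n c _ hn
    rw [reflect_C_mul_X_pow, revAt_le hn, ← Nat.sub_add_cancel hn]
    simp only [map_mul, aeval_C, map_pow, aeval_X, pow_add, Nat.add_sub_cancel]
    rw [← Units.val_pow_eq_pow_val, ← Units.val_pow_eq_pow_val, inv_pow, mul_assoc,
      Units.inv_mul_cancel_left]
  · intro p q _ _ hp hq
    rw [reflect_add, map_add, add_mul, hp, hq, map_add]

theorem aeval_inv_reverse_mul_pow {A : Type*} [Ring A] [Algebra E A] (u : Aˣ) (p : E[X]) :
    aeval (↑u⁻¹ : A) p.reverse * ↑u ^ p.natDegree = aeval (u : A) p :=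
  aeval_inv_reflect_mul_pow u le_rfl

theorem map_eq_C_mul_reverse_of_eq_pstar (hσ : Function.Involutive σ) {P : E[X]}
    (hP : P = pstar σ P) : P.map σ = C (P.coeff 0)⁻¹ * P.reverse := by
  have hσσ : σ.comp σ = RingHom.id E := RingHom.ext hσ
  conv_lhs => rw [hP]
  rw [pstar, Polynomial.map_mul, map_C, map_inv₀, hσ, reverse, reverse,
    natDegree_map_eq_of_injective hσ.injective, reflect_map, map_map, hσσ, Polynomial.map_id]

-- The adjoint of `P(g)` is `P^σ(g⁻¹)`, which `P = P*` turns into a unit times `P(g)`.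
theorem isAdjointPair_aeval_of_eq_pstar (hσ : Function.Involutive σ) {g : V ≃ₗ[E] V}
    (hg : ∀ x y, B (g x) (g y) = B x y) {P : E[X]} (hP : P = pstar σ P) :
    B.IsAdjointPair B ⇑(aeval (g : Module.End E V) P)
      ⇑(((P.coeff 0)⁻¹ • (g.symm : Module.End E V) ^ P.natDegree) *
        aeval (g : Module.End E V) P) := by
  let u := LinearMap.GeneralLinearGroup.ofLinearEquiv g
  have hu : B.IsAdjointPair B ⇑(u : Module.End E V) ⇑(↑u⁻¹ : Module.End E V) :=
    fun x y => (g.apply_symm_apply y ▸ hg x (g.symm y) :)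
  have hPσσ : (P.map σ).map σ = P := by
    rw [map_map, show σ.comp σ = RingHom.id E from RingHom.ext hσ, Polynomial.map_id]
  have hrev : aeval (↑u⁻¹ : Module.End E V) P.reverse
      = (↑u⁻¹ : Module.End E V) ^ P.natDegree * aeval (u : Module.End E V) P := by
    have hcomm : Commute (u : Module.End E V) (aeval (↑u⁻¹ : Module.End E V) P.reverse) :=
      Commute.units_inv_left_iff.mp (commute_aeval_self _ _)
    rw [← aeval_inv_reverse_mul_pow u P, ← (hcomm.pow_left _).eq, ← Units.val_pow_eq_pow_val,
      ← Units.val_pow_eq_pow_val, inv_pow, Units.inv_mul_cancel_left]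
  have := hu.aeval_map (P.map σ)
  rwa [hPσσ, map_eq_C_mul_reverse_of_eq_pstar hσ hP, map_mul, aeval_C, hrev,
    Algebra.algebraMap_eq_smul_one, smul_mul_assoc, one_mul, ← smul_mul_assoc] at this

variable [FiniteDimensional E V] {P : E[X]} {a : ℕ}

theorem perp_ker_aeval_pow_eq (hσ : Function.Involutive σ)
    (hB : ∀ w, (∀ x, B x w = 0) → w = 0) {g : V ≃ₗ[E] V} (hg : ∀ x y, B (g x) (g y) = B x y)
    (hPm : P.Monic) (hP : Irreducible P) (hPstar : P = pstar σ P)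
    (hchar : (g : Module.End E V).charpoly = P ^ a)
    (hmin : minpoly E (g : Module.End E V) = P ^ a) {m : ℕ} (hm : m ≤ a) :
    perp B (LinearMap.ker (aeval (g : Module.End E V) P ^ m))
      = LinearMap.ker (aeval (g : Module.End E V) P ^ (a - m)) := by
  set q := aeval (g : Module.End E V) P
  have hdim : ∀ k ≤ a, finrank E (LinearMap.ker (q ^ k)) = k * P.natDegree :=
    fun k hk => finrank_ker_aeval_pow hPm hP hchar hmin hk
  have hV := finrank_eq_mul_natDegree_of_charpoly_eq_pow hchar
  have hsplit : m * P.natDegree + (a - m) * P.natDegree = a * P.natDegree := by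
    rw [← Nat.add_mul, Nat.add_sub_cancel' hm]
  have hrange : LinearMap.range (q ^ m) = LinearMap.ker (q ^ (a - m)) := by
    refine Submodule.eq_of_le_of_finrank_eq ?_ ?_
    · rintro _ ⟨x, rfl⟩
      rw [LinearMap.mem_ker, ← Module.End.mul_apply, ← pow_add, Nat.sub_add_cancel hm,
        ← map_pow, ← hmin, minpoly.aeval, LinearMap.zero_apply]
    · have := LinearMap.finrank_range_add_finrank_ker (q ^ m)
      rw [hdim m hm] at this
      rw [hdim (a - m) (Nat.sub_le a m)]
      omega
  have hcomm : Commute ((P.coeff 0)⁻¹ • (g.symm : Module.End E V) ^ P.natDegree) q :=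
    ((Commute.units_inv_left_iff (u := LinearMap.GeneralLinearGroup.ofLinearEquiv g)).mpr
      (commute_aeval_self _ P)).pow_left _ |>.smul_left _
  have hle := hrange ▸ range_pow_le_perp_ker_pow (isAdjointPair_aeval_of_eq_pstar hσ hg hPstar)
    hcomm m
  refine (Submodule.eq_of_le_of_finrank_eq hle ?_).symm
  change _ = finrank E (perp B (LinearMap.ker (q ^ m)))
  have := finrank_perp_add_finrank hσ.bijective B hB (LinearMap.ker (q ^ m))
  rw [hdim m hm] at this
  rw [hdim (a - m) (Nat.sub_le a m)]
  omega

end Adjoint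

section Isotropic

variable {E : Type*} [Field E] {V : Type*} [AddCommGroup V] [Module E V] [FiniteDimensional E V]
  {σ : E →+* E} {B : V →ₗ[E] V →ₛₗ[σ] E} {f : Module.End E V} {P : E[X]} {a : ℕ}

theorem ker_aeval_pow_le_perp_iff (hPm : P.Monic) (hP : Irreducible P)
    (hchar : f.charpoly = P ^ a) (hmin : minpoly E f = P ^ a) {m : ℕ} (hm : m ≤ a)
    (hperp : perp B (LinearMap.ker (aeval f P ^ m)) = LinearMap.ker (aeval f P ^ (a - m))) :
    LinearMap.ker (aeval f P ^ m) ≤ perp B (LinearMap.ker (aeval f P ^ m)) ↔ 2 * m ≤ a := by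
  rw [hperp]
  refine ⟨fun h => ?_, fun h => ker_pow_le_ker_pow _ (by omega)⟩
  have := Submodule.finrank_mono h
  rw [finrank_ker_aeval_pow hPm hP hchar hmin hm,
    finrank_ker_aeval_pow hPm hP hchar hmin (Nat.sub_le a m)] at this
  have := Nat.le_of_mul_le_mul_right this hP.natDegree_pos
  omega

theorem ker_aeval_pow_half_unique_max_isotropic_of_even (hσ : Function.Bijective σ)
    (hB : ∀ w, (∀ x, B x w = 0) → w = 0) (hPm : P.Monic) (hP : Irreducible P)
    (hchar : f.charpoly = P ^ a) (hmin : minpoly E f = P ^ a)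
    (hperp : ∀ m ≤ a, perp B (LinearMap.ker (aeval f P ^ m)) = LinearMap.ker (aeval f P ^ (a - m)))
    (ha : Even a) :
    Submodule.map f (LinearMap.ker (aeval f P ^ (a / 2))) ≤ LinearMap.ker (aeval f P ^ (a / 2)) ∧
    LinearMap.ker (aeval f P ^ (a / 2)) ≤ perp B (LinearMap.ker (aeval f P ^ (a / 2))) ∧
    (∀ W' : Submodule E V, LinearMap.ker (aeval f P ^ (a / 2)) ≤ W' → W' ≤ perp B W' →
      W' = LinearMap.ker (aeval f P ^ (a / 2))) ∧
    (∀ W : Submodule E V, Submodule.map f W ≤ W → W ≤ perp B W →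
      (∀ W' : Submodule E V, W ≤ W' → W' ≤ perp B W' → W' = W) →
      W = LinearMap.ker (aeval f P ^ (a / 2))) := by
  obtain ⟨k, rfl⟩ := ha
  have hk : (k + k) / 2 = k := by omega
  rw [hk]
  have hiso : ∀ j ≤ k + k, (LinearMap.ker (aeval f P ^ j) ≤ perp B (LinearMap.ker (aeval f P ^ j))
      ↔ 2 * j ≤ k + k) := fun j hj => ker_aeval_pow_le_perp_iff hPm hP hchar hmin hj (hperp j hj)
  refine ⟨Submodule.map_le_iff_le_comap.mpr (ker_aeval_pow_invariant f P k),
    (hiso k (by omega)).mpr (by omega), fun W' hle hW' => ?_, fun W hW hiso' hmax => ?_⟩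
  · refine (Submodule.eq_of_le_of_finrank_le hle ?_).symm
    have := two_mul_finrank_le_of_le_perp hσ hB hW'
    rw [finrank_eq_mul_natDegree_of_charpoly_eq_pow hchar] at this
    rw [finrank_ker_aeval_pow hPm hP hchar hmin (by omega)]
    nlinarith
  · obtain ⟨j, hj, rfl⟩ := exists_eq_ker_aeval_pow_of_invariant hPm hP hchar hmin
      fun x hx => hW ⟨x, hx, rfl⟩
    exact (hmax _ (ker_pow_le_ker_pow _ (by have := (hiso j hj).mp hiso'; omega))
      ((hiso k (by omega)).mpr (by omega))).symm

theorem ker_aeval_pow_half_unique_isotropic_of_odd (hPm : P.Monic) (hP : Irreducible P)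
    (hchar : f.charpoly = P ^ a) (hmin : minpoly E f = P ^ a)
    (hperp : ∀ m ≤ a, perp B (LinearMap.ker (aeval f P ^ m)) = LinearMap.ker (aeval f P ^ (a - m)))
    (ha : Odd a) :
    Submodule.map f (LinearMap.ker (aeval f P ^ ((a - 1) / 2)))
        ≤ LinearMap.ker (aeval f P ^ ((a - 1) / 2)) ∧
    LinearMap.ker (aeval f P ^ ((a - 1) / 2))
        ≤ perp B (LinearMap.ker (aeval f P ^ ((a - 1) / 2))) ∧
    (inducedMap f (LinearMap.ker (aeval f P ^ ((a - 1) / 2)))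
        (perp B (LinearMap.ker (aeval f P ^ ((a - 1) / 2))))).charpoly = P ∧
    (∀ W' : Submodule E V, Submodule.map f W' ≤ W' → W' ≤ perp B W' →
      Irreducible (inducedMap f W' (perp B W')).charpoly →
      W' = LinearMap.ker (aeval f P ^ ((a - 1) / 2))) := by
  obtain ⟨k, rfl⟩ := ha
  have hk : (2 * k + 1 - 1) / 2 = k := by omega
  rw [hk]
  refine ⟨Submodule.map_le_iff_le_comap.mpr (ker_aeval_pow_invariant f P k),
    (ker_aeval_pow_le_perp_iff hPm hP hchar hmin (by omega) (hperp k (by omega))).mpr (by omega),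
    ?_, fun W hW hiso hirr => ?_⟩
  · rw [hperp k (by omega),
      charpoly_inducedMap_ker_aeval_pow hPm hP hchar hmin (by omega) (Nat.sub_le _ _),
      show 2 * k + 1 - k - k = 1 by omega, pow_one]
  · obtain ⟨j, hj, rfl⟩ := exists_eq_ker_aeval_pow_of_invariant hPm hP hchar hmin
      fun x hx => hW ⟨x, hx, rfl⟩
    have h2j := (ker_aeval_pow_le_perp_iff hPm hP hchar hmin hj (hperp j hj)).mp hiso
    rw [hperp j hj,
      charpoly_inducedMap_ker_aeval_pow hPm hP hchar hmin (by omega) (Nat.sub_le _ _)] at hirr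
    have : 2 * k + 1 - j - j = 1 := by_contra fun h => not_irreducible_pow h hirr
    congr 2
    omega

end Isotropic

theorem stmt16_general {E : Type*} [Field E] (σ : E →+* E) (hσ : ∀ x, σ (σ x) = x)
    {V : Type*} [AddCommGroup V] [Module E V] [FiniteDimensional E V]
    (B : V →ₗ[E] V →ₛₗ[σ] E)
    (h_herm : ∀ x y : V, B y x = σ (B x y))
    (h_nondeg : ∀ x : V, (∀ y : V, B x y = 0) → x = 0)
    (g : V ≃ₗ[E] V) (hg : ∀ x y : V, B (g x) (g y) = B x y)
    (P : Polynomial E) (a : ℕ) (hPmonic : P.Monic) (hPirr : Irreducible P)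
    (hPstar : P = pstar σ P)
    (hreg : LinearMap.charpoly g.toLinearMap = minpoly E g.toLinearMap)
    (hchar : LinearMap.charpoly g.toLinearMap = P ^ a) :
    (∀ m ≤ a, perp B (LinearMap.ker ((Polynomial.aeval g.toLinearMap P) ^ m))
        = LinearMap.ker ((Polynomial.aeval g.toLinearMap P) ^ (a - m))) ∧
    (∀ m ≤ a, (LinearMap.ker ((Polynomial.aeval g.toLinearMap P) ^ m)
          ≤ perp B (LinearMap.ker ((Polynomial.aeval g.toLinearMap P) ^ m)) ↔ 2 * m ≤ a)) ∧
    (Even a →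
      (Submodule.map g.toLinearMap (LinearMap.ker ((Polynomial.aeval g.toLinearMap P) ^ (a / 2)))
          ≤ LinearMap.ker ((Polynomial.aeval g.toLinearMap P) ^ (a / 2)) ∧
       LinearMap.ker ((Polynomial.aeval g.toLinearMap P) ^ (a / 2))
          ≤ perp B (LinearMap.ker ((Polynomial.aeval g.toLinearMap P) ^ (a / 2))) ∧
       (∀ W' : Submodule E V,
          LinearMap.ker ((Polynomial.aeval g.toLinearMap P) ^ (a / 2)) ≤ W' →
          W' ≤ perp B W' →
          W' = LinearMap.ker ((Polynomial.aeval g.toLinearMap P) ^ (a / 2))) ∧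
       (∀ W : Submodule E V, Submodule.map g.toLinearMap W ≤ W → W ≤ perp B W →
          (∀ W' : Submodule E V, W ≤ W' → W' ≤ perp B W' → W' = W) →
          W = LinearMap.ker ((Polynomial.aeval g.toLinearMap P) ^ (a / 2))))) ∧
    (Odd a →
      (Submodule.map g.toLinearMap
          (LinearMap.ker ((Polynomial.aeval g.toLinearMap P) ^ ((a - 1) / 2)))
          ≤ LinearMap.ker ((Polynomial.aeval g.toLinearMap P) ^ ((a - 1) / 2)) ∧
       LinearMap.ker ((Polynomial.aeval g.toLinearMap P) ^ ((a - 1) / 2))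
          ≤ perp B (LinearMap.ker ((Polynomial.aeval g.toLinearMap P) ^ ((a - 1) / 2))) ∧
       LinearMap.charpoly (inducedMap g.toLinearMap
          (LinearMap.ker ((Polynomial.aeval g.toLinearMap P) ^ ((a - 1) / 2)))
          (perp B (LinearMap.ker ((Polynomial.aeval g.toLinearMap P) ^ ((a - 1) / 2))))) = P ∧
       (∀ W' : Submodule E V, Submodule.map g.toLinearMap W' ≤ W' → W' ≤ perp B W' →
          Irreducible (LinearMap.charpoly (inducedMap g.toLinearMap W' (perp B W'))) →
          W' = LinearMap.ker ((Polynomial.aeval g.toLinearMap P) ^ ((a - 1) / 2))))) := by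
  have hmin : minpoly E g.toLinearMap = P ^ a := hreg ▸ hchar
  have hB : ∀ w, (∀ x, B x w = 0) → w = 0 :=
    fun w hw => h_nondeg w fun x => by rw [h_herm, hw, map_zero]
  have hperp : ∀ m ≤ a, perp B (LinearMap.ker (aeval g.toLinearMap P ^ m))
      = LinearMap.ker (aeval g.toLinearMap P ^ (a - m)) :=
    fun m hm => perp_ker_aeval_pow_eq hσ hB hg hPmonic hPirr hPstar hchar hmin hm
  exact ⟨hperp,
    fun m hm => ker_aeval_pow_le_perp_iff hPmonic hPirr hchar hmin hm (hperp m hm),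
    ker_aeval_pow_half_unique_max_isotropic_of_even (Function.Involutive.bijective hσ) hB hPmonic
      hPirr hchar hmin hperp,
    ker_aeval_pow_half_unique_isotropic_of_odd hPmonic hPirr hchar hmin hperp⟩

/-- Let `g` be a regular unitary automorphism of a hermitian space `(V, h)` over
`(E, σ)` with characteristic polynomial = minimal polynomial = `P^a`, `P` monic irreducible and
`P = P*`. Then: (i) `(ker P(g)^m)^⊥ = ker P(g)^{a−m}` for `0 ≤ m ≤ a`; (ii) `ker P(g)^m` is
totally isotropic iff `2m ≤ a`; (iii) if `a` is even, `ker P(g)^{a/2}` is the unique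
`g`-invariant maximal totally isotropic subspace; (iv) if `a` is odd, `W = ker P(g)^{(a−1)/2}`
is the unique `g`-invariant totally isotropic subspace such that the characteristic polynomial
of `g` on `W^⊥/W` is irreducible, and that characteristic polynomial equals `P`. -/
theorem stmt16 {E : Type*} [Field E] (σ : E →+* E) (hσ : ∀ x, σ (σ x) = x)
    {V : Type*} [AddCommGroup V] [Module E V] [FiniteDimensional E V]
    (B : V →ₗ[E] V →ₛₗ[σ] E)
    (h_herm : ∀ x y : V, B y x = σ (B x y))
    (h_nondeg : ∀ x : V, (∀ y : V, B x y = 0) → x = 0)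
    (g : V ≃ₗ[E] V) (hg : ∀ x y : V, B (g x) (g y) = B x y)
    (P : Polynomial E) (a : ℕ) (hPmonic : P.Monic) (hPirr : Irreducible P)
    (hPstar : P = pstar σ P) (ha : 1 ≤ a)
    (hreg : LinearMap.charpoly g.toLinearMap = minpoly E g.toLinearMap)
    (hchar : LinearMap.charpoly g.toLinearMap = P ^ a) :
    (∀ m ≤ a, perp B (LinearMap.ker ((Polynomial.aeval g.toLinearMap P) ^ m))
        = LinearMap.ker ((Polynomial.aeval g.toLinearMap P) ^ (a - m))) ∧
    (∀ m ≤ a, (LinearMap.ker ((Polynomial.aeval g.toLinearMap P) ^ m)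
          ≤ perp B (LinearMap.ker ((Polynomial.aeval g.toLinearMap P) ^ m)) ↔ 2 * m ≤ a)) ∧
    (Even a →
      (Submodule.map g.toLinearMap (LinearMap.ker ((Polynomial.aeval g.toLinearMap P) ^ (a / 2)))
          ≤ LinearMap.ker ((Polynomial.aeval g.toLinearMap P) ^ (a / 2)) ∧
       LinearMap.ker ((Polynomial.aeval g.toLinearMap P) ^ (a / 2))
          ≤ perp B (LinearMap.ker ((Polynomial.aeval g.toLinearMap P) ^ (a / 2))) ∧
       (∀ W' : Submodule E V,
          LinearMap.ker ((Polynomial.aeval g.toLinearMap P) ^ (a / 2)) ≤ W' →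
          W' ≤ perp B W' →
          W' = LinearMap.ker ((Polynomial.aeval g.toLinearMap P) ^ (a / 2))) ∧
       (∀ W : Submodule E V, Submodule.map g.toLinearMap W ≤ W → W ≤ perp B W →
          (∀ W' : Submodule E V, W ≤ W' → W' ≤ perp B W' → W' = W) →
          W = LinearMap.ker ((Polynomial.aeval g.toLinearMap P) ^ (a / 2))))) ∧
    (Odd a →
      (Submodule.map g.toLinearMap
          (LinearMap.ker ((Polynomial.aeval g.toLinearMap P) ^ ((a - 1) / 2)))
          ≤ LinearMap.ker ((Polynomial.aeval g.toLinearMap P) ^ ((a - 1) / 2)) ∧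
       LinearMap.ker ((Polynomial.aeval g.toLinearMap P) ^ ((a - 1) / 2))
          ≤ perp B (LinearMap.ker ((Polynomial.aeval g.toLinearMap P) ^ ((a - 1) / 2))) ∧
       LinearMap.charpoly (inducedMap g.toLinearMap
          (LinearMap.ker ((Polynomial.aeval g.toLinearMap P) ^ ((a - 1) / 2)))
          (perp B (LinearMap.ker ((Polynomial.aeval g.toLinearMap P) ^ ((a - 1) / 2))))) = P ∧
       (∀ W' : Submodule E V, Submodule.map g.toLinearMap W' ≤ W' → W' ≤ perp B W' →
          Irreducible (LinearMap.charpoly (inducedMap g.toLinearMap W' (perp B W'))) →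
          W' = LinearMap.ker ((Polynomial.aeval g.toLinearMap P) ^ ((a - 1) / 2))))) :=
  stmt16_general σ hσ B h_herm h_nondeg g hg P a hPmonic hPirr hPstar hreg hchar
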